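/- arXiv:1407.0776 — 4 statements merged into one kernel-verified Lean document; each statement's English description precedes it below -/
import Mathlib

section
/- Let $x_1,\dots,x_N$ and $y_1,\dots,y_N$ be finite sequences in $[0,1)$, and let $\epsilon_1,\dots,\epsilon_N$ be nonnegative numbers with $|x_n - y_n| \le \epsilon_n$ for all $1 \le n \le N$. Then for any $\epsilon \ge 0$, $|D_N(x_1,\dots,x_N) - D_N(y_1,\dots,y_N)| \le 2\epsilon + \overline{N}(\epsilon)/N$, where $\overline{N}(\epsilon)$ is the number of indices $n$ with $\epsilon_n > \epsilon$. -/
/-!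
Moving every point by at most `ε` can only carry it out of `[a, b)` into the thickened interval
`[a - ε, b + ε)`, except at the `N̄(ε)` indices where `e n > ε`. Hence the count of `x` in `[a, b)`
is at most the count of `y` in the thickened interval (clipped to `[0, 1]`, which loses nothing
since `y` lives there) plus `N̄(ε)`, and the count of `y` in the shrunk interval `[a + ε, b - ε)`
is at most the count of `x` in `[a, b)` plus `N̄(ε)`. Thickening or shrinking changes the length
by at most `2ε`, and intervals of length at most `2ε` contribute at most `2ε` on their own.
-/

open scoped Classical
open Filter

noncomputable section

/-- `A_N([α,β), x)`: the number of indices `n < N` with `x n ∈ [α,β)`. -/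
def countIn (N : ℕ) (x : ℕ → ℝ) (a b : ℝ) : ℕ :=
  ((Finset.range N).filter (fun n => x n ∈ Set.Ico a b)).card

/-- The discrepancy `D_N` of the finite sequence `x 0, …, x (N-1)`. -/
def disc (N : ℕ) (x : ℕ → ℝ) : ℝ :=
  ⨆ p : {p : ℝ × ℝ // 0 ≤ p.1 ∧ p.1 ≤ p.2 ∧ p.2 ≤ 1},
    |(countIn N x p.1.1 p.1.2 : ℝ) / N - (p.1.2 - p.1.1)|

lemma countIn_le (N : ℕ) (x : ℕ → ℝ) (a b : ℝ) : countIn N x a b ≤ N := by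
  simpa [countIn] using Finset.card_filter_le (Finset.range N) (fun n => x n ∈ Set.Ico a b)

lemma countIn_eq_countIn_max_min {N : ℕ} {y : ℕ → ℝ} {c d : ℝ}
    (hy : ∀ n < N, y n ∈ Set.Ico c d) (a b : ℝ) :
    countIn N y a b = countIn N y (max a c) (min b d) := by
  unfold countIn
  congr 1
  refine Finset.filter_congr fun n hn => ?_
  rw [← Set.Ico_inter_Ico, Set.mem_inter_iff, iff_self_and]
  exact fun _ => hy n (Finset.mem_range.mp hn)

lemma countIn_le_countIn_sub_add {N : ℕ} {x y e : ℕ → ℝ}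
    (hxy : ∀ n < N, |x n - y n| ≤ e n) (ε a b : ℝ) :
    countIn N x a b ≤
      countIn N y (a - ε) (b + ε) + ((Finset.range N).filter (fun n => ε < e n)).card := by
  unfold countIn
  refine (Finset.card_le_card fun n hn => ?_).trans (Finset.card_union_le _ _)
  simp only [Finset.mem_filter, Finset.mem_range, Finset.mem_union, Set.mem_Ico] at hn ⊢
  obtain ⟨hnN, hax, hxb⟩ := hn
  by_cases hbad : ε < e n
  · exact Or.inr ⟨hnN, hbad⟩
  · have hclose := abs_le.mp ((hxy n hnN).trans (not_lt.mp hbad))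
    exact Or.inl ⟨hnN, by linarith, by linarith⟩

lemma bddAbove_range_abs_countIn_div_sub (N : ℕ) (x : ℕ → ℝ) :
    BddAbove (Set.range fun p : {p : ℝ × ℝ // 0 ≤ p.1 ∧ p.1 ≤ p.2 ∧ p.2 ≤ 1} =>
      |(countIn N x p.1.1 p.1.2 : ℝ) / N - (p.1.2 - p.1.1)|) := by
  refine ⟨1, ?_⟩
  rintro r ⟨⟨⟨a, b⟩, h0, hab, h1⟩, rfl⟩
  have hle : (countIn N x a b : ℝ) / N ≤ 1 :=
    div_le_one_of_le₀ (by exact_mod_cast countIn_le N x a b) N.cast_nonneg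
  have hnonneg : 0 ≤ (countIn N x a b : ℝ) / N := by positivity
  exact abs_le.mpr ⟨by linarith, by linarith⟩

lemma abs_countIn_div_sub_le_disc (N : ℕ) (x : ℕ → ℝ) {a b : ℝ}
    (h0 : 0 ≤ a) (hab : a ≤ b) (h1 : b ≤ 1) :
    |(countIn N x a b : ℝ) / N - (b - a)| ≤ disc N x :=
  le_ciSup (bddAbove_range_abs_countIn_div_sub N x) ⟨(a, b), h0, hab, h1⟩

lemma disc_nonneg (N : ℕ) (x : ℕ → ℝ) : 0 ≤ disc N x :=
  (abs_nonneg _).trans (abs_countIn_div_sub_le_disc N x le_rfl zero_le_one le_rfl)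

section Perturbation

variable {N : ℕ} {x y e : ℕ → ℝ} {ε a b : ℝ}

lemma countIn_div_sub_le_disc_add (hy : ∀ n < N, y n ∈ Set.Ico (0 : ℝ) 1)
    (hxy : ∀ n < N, |x n - y n| ≤ e n) (hε : 0 ≤ ε) (h0 : 0 ≤ a) (hab : a ≤ b) (h1 : b ≤ 1) :
    (countIn N x a b : ℝ) / N - (b - a) ≤
      disc N y + (2 * ε + (((Finset.range N).filter (fun n => ε < e n)).card : ℝ) / N) := by
  set M := ((Finset.range N).filter (fun n => ε < e n)).card
  set a' := max (a - ε) 0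
  set b' := min (b + ε) 1
  have hcount : (countIn N x a b : ℝ) ≤ countIn N y a' b' + M := by
    have h := countIn_le_countIn_sub_add hxy ε a b
    rw [countIn_eq_countIn_max_min hy] at h
    exact_mod_cast h
  have hdiv : (countIn N x a b : ℝ) / N ≤ countIn N y a' b' / N + M / N := by
    rw [← add_div]
    exact div_le_div_of_nonneg_right hcount N.cast_nonneg
  have hlen : b' - a' ≤ b - a + 2 * ε := by
    linarith [min_le_left (b + ε) 1, le_max_left (a - ε) 0]
  have hab' : a' ≤ b' :=
    max_le (le_min (by linarith) (by linarith)) (le_min (by linarith) zero_le_one)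
  have hdisc := (le_abs_self _).trans
    (abs_countIn_div_sub_le_disc N y (le_max_right _ _) hab' (min_le_right _ _))
  linarith

lemma sub_countIn_div_le_disc_add (hxy : ∀ n < N, |x n - y n| ≤ e n) (hε : 0 ≤ ε)
    (h0 : 0 ≤ a) (h1 : b ≤ 1) :
    (b - a) - (countIn N x a b : ℝ) / N ≤
      disc N y + (2 * ε + (((Finset.range N).filter (fun n => ε < e n)).card : ℝ) / N) := by
  set M := ((Finset.range N).filter (fun n => ε < e n)).card
  obtain hshort | hlong := le_or_gt (b - a) (2 * ε)
  · have hM : (0 : ℝ) ≤ M / N := by positivity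
    have hcount_nonneg : 0 ≤ (countIn N x a b : ℝ) / N := by positivity
    linarith [disc_nonneg N y]
  have hyx : ∀ n < N, |y n - x n| ≤ e n := fun n hn => abs_sub_comm (x n) (y n) ▸ hxy n hn
  have hcount : (countIn N y (a + ε) (b - ε) : ℝ) ≤ countIn N x a b + M := by
    have h := countIn_le_countIn_sub_add hyx ε (a + ε) (b - ε)
    rw [add_sub_cancel_right, sub_add_cancel] at h
    exact_mod_cast h
  have hdiv : (countIn N y (a + ε) (b - ε) : ℝ) / N ≤ countIn N x a b / N + M / N := by
    rw [← add_div]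
    exact div_le_div_of_nonneg_right hcount N.cast_nonneg
  have hdisc := (neg_le_abs _).trans
    (abs_countIn_div_sub_le_disc N y (a := a + ε) (b := b - ε) (by linarith) (by linarith)
      (by linarith))
  linarith

lemma disc_sub_disc_le (hy : ∀ n < N, y n ∈ Set.Ico (0 : ℝ) 1)
    (hxy : ∀ n < N, |x n - y n| ≤ e n) (hε : 0 ≤ ε) :
    disc N x - disc N y ≤
      2 * ε + (((Finset.range N).filter (fun n => ε < e n)).card : ℝ) / N := by
  have : Nonempty {p : ℝ × ℝ // 0 ≤ p.1 ∧ p.1 ≤ p.2 ∧ p.2 ≤ 1} := ⟨⟨(0, 1), by norm_num⟩⟩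
  rw [sub_le_iff_le_add']
  refine ciSup_le fun ⟨⟨a, b⟩, h0, hab, h1⟩ => abs_le'.mpr
    ⟨countIn_div_sub_le_disc_add hy hxy hε h0 hab h1, ?_⟩
  rw [neg_sub]
  exact sub_countIn_div_le_disc_add hxy hε h0 h1

end Perturbation

theorem disc_diff_le_general (N : ℕ) (x y : ℕ → ℝ)
    (hx : ∀ n < N, x n ∈ Set.Ico (0 : ℝ) 1) (hy : ∀ n < N, y n ∈ Set.Ico (0 : ℝ) 1)
    (e : ℕ → ℝ) (hxy : ∀ n < N, |x n - y n| ≤ e n)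
    (ε : ℝ) (hε : 0 ≤ ε) :
    |disc N x - disc N y| ≤
      2 * ε + (((Finset.range N).filter (fun n => ε < e n)).card : ℝ) / N := by
  have hyx : ∀ n < N, |y n - x n| ≤ e n := fun n hn => abs_sub_comm (x n) (y n) ▸ hxy n hn
  exact abs_sub_le_iff.mpr ⟨disc_sub_disc_le hy hxy hε, disc_sub_disc_le hx hyx hε⟩

theorem disc_diff_le (N : ℕ) (hN : 0 < N) (x y : ℕ → ℝ)
    (hx : ∀ n < N, x n ∈ Set.Ico (0 : ℝ) 1) (hy : ∀ n < N, y n ∈ Set.Ico (0 : ℝ) 1)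
    (e : ℕ → ℝ) (he : ∀ n < N, 0 ≤ e n) (hxy : ∀ n < N, |x n - y n| ≤ e n)
    (ε : ℝ) (hε : 0 ≤ ε) :
    |disc N x - disc N y| ≤
      2 * ε + (((Finset.range N).filter (fun n => ε < e n)).card : ℝ) / N :=
  disc_diff_le_general N x y hx hy e hxy ε hε
end
end

section
/- Let $E(\mathcal{F})$ be a homogeneous Moran set determined by a closed interval $J$ of length $\delta > 0$, a sequence $(n_k)$ of integers with $n_k \ge 2$, and a sequence $(c_k)$ of reals with $0 < c_k < 1$, $n_1 c_1 \le \delta$, and $n_k c_k \le 1$ for all $k$. Then $\liminf_{k\to\infty} \frac{\log(n_1 n_2 \cdots n_k)}{-\log(c_1 c_2 \cdots c_{k+1} n_{k+1})} \le \dim_H E(\mathcal{F}) \le \liminf_{k\to\infty} \frac{\log(n_1 n_2 \cdots n_k)}{-\log(c_1 c_2 \cdots c_k)}$. -/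
open scoped Classical ENNReal
open Filter MeasureTheory

noncomputable section

/-- Index lists: `l` is a valid address at depth `l.length`, its `j`-th entry
choosing one of the `nk j` children at level `j + 1`. -/
def ValidAddr (nk : ℕ → ℕ) (l : List ℕ) : Prop :=
  ∀ j : ℕ, ∀ h : j < l.length, l.get ⟨j, h⟩ < nk j

/-- The collection `Js` of closed subintervals of `J` has homogeneous Moran
structure with branching numbers `nk` and contraction ratios `ck`
(indexed from `0`, so `nk k` is the paper's `n_{k+1}`). -/
def HomogMoranStructure (J : Set ℝ) (nk : ℕ → ℕ) (ck : ℕ → ℝ)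
    (Js : List ℕ → Set ℝ) : Prop :=
  Js [] = J ∧
  (∀ l : List ℕ, ValidAddr nk l →
    ∀ i < nk l.length, Js (l ++ [i]) ⊆ Js l) ∧
  (∀ l : List ℕ, ValidAddr nk l → ∀ i j, i < nk l.length → j < nk l.length →
    i ≠ j → interior (Js (l ++ [i])) ∩ interior (Js (l ++ [j])) = ∅) ∧
  (∀ l : List ℕ, ValidAddr nk l → ∀ i < nk l.length,
    volume (Js (l ++ [i])) = ENNReal.ofReal (ck l.length) * volume (Js l)) ∧
  (∀ l : List ℕ, ValidAddr nk l → ∀ i < nk l.length,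
    ∃ a b : ℝ, a ≤ b ∧ Js (l ++ [i]) = Set.Icc a b)

/-- The homogeneous Moran set determined by `Js`. -/
def MoranSet (nk : ℕ → ℕ) (Js : List ℕ → Set ℝ) : Set ℝ :=
  ⋂ k ∈ Set.Ici 1, ⋃ l ∈ {l : List ℕ | l.length = k ∧ ValidAddr nk l}, Js l

/-!
There are `N_k = n₁⋯n_k` basic intervals of level `k`, all of length `δ c₁⋯c_k`.

Upper bound: covering `E` by the level-`k` intervals gives
`μH[s] E ≤ liminf N_k (δ c₁⋯c_k)^s`, which is finite as soon as `s` exceeds the lower limit.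

Lower bound: mass distribution principle. Reading `x ∈ [0, 1)` in the mixed radix `(n₁, n₂, …)`
codes a point of `E`; the push-forward `μ` of Lebesgue measure gives mass at most `#S / N_k` to any
set meeting only the level-`k` intervals in `S`. A set of diameter `d` with
`δ c₁⋯c_{k+1} ≤ d < δ c₁⋯c_k` meets at most two level-`k` intervals, so at most
`min (2 n_{k+1}) (3 d / (δ c₁⋯c_{k+1}))` level-`(k+1)` ones; bounding the minimum by
`a^(1-s) b^s` gives `μ T ≤ 6 δ^(-s) d^s` whenever `s` lies below the lower limit.
-/

open Topology

theorem Real.le_rpow_mul_rpow_of_le_of_le {x a b s : ℝ} (hx : 0 ≤ x) (ha : x ≤ a) (hb : x ≤ b)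
    (hs0 : 0 ≤ s) (hs1 : s ≤ 1) : x ≤ a ^ (1 - s) * b ^ s :=
  calc x = x ^ (1 - s) * x ^ s := by
        rw [← Real.rpow_add' hx (by norm_num), sub_add_cancel, Real.rpow_one]
    _ ≤ a ^ (1 - s) * b ^ s :=
        mul_le_mul (Real.rpow_le_rpow hx ha (by linarith)) (Real.rpow_le_rpow hx hb hs0)
          (Real.rpow_nonneg hx s) (Real.rpow_nonneg (hx.trans ha) _)

theorem Real.lt_log_div_neg_log_iff {N x s : ℝ} (hN : 0 < N) (hx0 : 0 < x) (hx1 : x < 1) :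
    s < Real.log N / -Real.log x ↔ 1 < N * x ^ s := by
  have hlog : 0 < -Real.log x := neg_pos.2 (Real.log_neg hx0 hx1)
  rw [lt_div_iff₀ hlog, ← Real.log_pos_iff (by positivity),
    Real.log_mul hN.ne' (Real.rpow_pos_of_pos hx0 s).ne', Real.log_rpow hx0]
  constructor <;> intro h <;> linarith

theorem Real.log_div_neg_log_lt_iff {N x s : ℝ} (hN : 0 < N) (hx0 : 0 < x) (hx1 : x < 1) :
    Real.log N / -Real.log x < s ↔ N * x ^ s < 1 := by
  have hlog : 0 < -Real.log x := neg_pos.2 (Real.log_neg hx0 hx1)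
  rw [div_lt_iff₀ hlog, ← Real.log_neg_iff (by positivity),
    Real.log_mul hN.ne' (Real.rpow_pos_of_pos hx0 s).ne', Real.log_rpow hx0]
  constructor <;> intro h <;> linarith

theorem Real.log_div_neg_log_nonneg {N x : ℝ} (hN : 1 ≤ N) (hx0 : 0 ≤ x) (hx1 : x ≤ 1) :
    0 ≤ Real.log N / -Real.log x :=
  div_nonneg (Real.log_nonneg hN) (neg_nonneg.2 (Real.log_nonpos hx0 hx1))

theorem Real.log_div_neg_log_le_one {N x : ℝ} (hN : 1 ≤ N) (hx : 0 < x) (hNx : N * x ≤ 1) :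
    Real.log N / -Real.log x ≤ 1 := by
  have hx1 : x ≤ 1 := by nlinarith
  refine div_le_one_of_le₀ ?_ (neg_nonneg.2 (Real.log_nonpos (by positivity) hx1))
  have := Real.log_nonpos (by positivity) hNx
  rw [Real.log_mul (by positivity) hx.ne'] at this
  linarith

theorem exists_le_lt_of_tendsto_zero {L : ℕ → ℝ} (hL : Tendsto L atTop (𝓝 0)) {d : ℝ}
    (hd : 0 < d) {K : ℕ} (hK : d < L K) : ∃ k, K ≤ k ∧ L (k + 1) ≤ d ∧ d < L k := by
  by_contra! h
  have hlt : ∀ k, K ≤ k → d < L k := by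
    intro k hk
    induction k, hk using Nat.le_induction with
    | base => exact hK
    | succ k hk ih => exact lt_of_not_ge fun h' => (h k hk h').not_gt ih
  obtain ⟨k, hk, hKk⟩ := ((hL.eventually (gt_mem_nhds hd)).and (eventually_ge_atTop K)).exists
  exact (hlt k hKk).not_gt hk

theorem Finset.card_le_div_add_one_of_separated {ι : Type*} {S : Finset ι} {a : ι → ℝ}
    {x w L : ℝ} (hw : 0 ≤ w) (hL : 0 < L) (hmem : ∀ i ∈ S, a i ∈ Set.Icc x (x + w))
    (hsep : ∀ i ∈ S, ∀ j ∈ S, i ≠ j → L ≤ |a i - a j|) : (S.card : ℝ) ≤ w / L + 1 := by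
  have hpos : ∀ i ∈ S, 0 ≤ (a i - x) / L := fun i hi =>
    div_nonneg (by linarith [(hmem i hi).1]) hL.le
  have hmaps : ∀ i ∈ S, ⌊(a i - x) / L⌋₊ ∈ Finset.range (⌊w / L⌋₊ + 1) := fun i hi =>
    Finset.mem_range_succ_iff.2 <| Nat.floor_le_floor <|
      div_le_div_of_nonneg_right (by linarith [(hmem i hi).2]) hL.le
  have hinj : Set.InjOn (fun i => ⌊(a i - x) / L⌋₊) S := by
    intro i hi j hj hij
    by_contra hne
    have hfl : ⌊(a i - x) / L⌋ = ⌊(a j - x) / L⌋ := by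
      rw [← Int.natCast_floor_eq_floor (hpos i hi), ← Int.natCast_floor_eq_floor (hpos j hj)]
      exact congrArg _ hij
    have h1 := Int.abs_sub_lt_one_of_floor_eq_floor hfl
    rw [← sub_div, sub_sub_sub_cancel_right, abs_div, abs_of_pos hL, div_lt_one hL] at h1
    exact (hsep i hi j hj hne).not_gt h1
  calc (S.card : ℝ) ≤ (⌊w / L⌋₊ + 1 : ℕ) := by
        exact_mod_cast (Finset.card_le_card_of_injOn _ hmaps hinj).trans (by simp)
    _ ≤ w / L + 1 := by push_cast; linarith [Nat.floor_le (div_nonneg hw hL.le)]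

theorem Finset.card_le_of_disjoint_Ioo_of_meets_Icc {ι : Type*} {S : Finset ι} {a : ι → ℝ}
    {y w L : ℝ} (hw : 0 ≤ w) (hL : 0 < L)
    (hdisj : ∀ i ∈ S, ∀ j ∈ S, i ≠ j → Disjoint (Set.Ioo (a i) (a i + L)) (Set.Ioo (a j) (a j + L)))
    (hmeet : ∀ i ∈ S, (Set.Icc (a i) (a i + L) ∩ Set.Icc y (y + w)).Nonempty) :
    (S.card : ℝ) ≤ w / L + 2 := by
  have hmem : ∀ i ∈ S, a i ∈ Set.Icc (y - L) (y - L + (w + L)) := by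
    intro i hi
    obtain ⟨z, ⟨hz1, hz2⟩, hz3, hz4⟩ := hmeet i hi
    constructor <;> linarith
  have hsep : ∀ i ∈ S, ∀ j ∈ S, i ≠ j → L ≤ |a i - a j| := by
    intro i hi j hj hij
    by_contra! hlt
    rw [abs_lt] at hlt
    exact Set.disjoint_left.1 (hdisj i hi j hj hij)
      (show (a i + a j + L) / 2 ∈ Set.Ioo (a i) (a i + L) from ⟨by linarith, by linarith⟩)
      ⟨by linarith, by linarith⟩
  have := Finset.card_le_div_add_one_of_separated (by linarith) hL hmem hsep
  rwa [add_div, div_self hL.ne', add_assoc, one_add_one_eq_two] at this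

theorem dimH_le_of_frequently_card_mul_rpow_le {X : Type*} [EMetricSpace X] [MeasurableSpace X]
    [BorelSpace X] {E : Set X} {s : ℝ} (hs : 0 ≤ s) {N : ℕ → ℕ} (U : ∀ k, Fin (N k) → Set X)
    {r : ℕ → ℝ≥0∞} (hr : Tendsto r atTop (𝓝 0)) (hU : ∀ k i, Metric.ediam (U k i) ≤ r k)
    (hE : ∀ᶠ k in atTop, E ⊆ ⋃ i, U k i) {B : ℝ≥0∞} (hB : B ≠ ∞)
    (hfreq : ∃ᶠ k in atTop, N k * r k ^ s ≤ B) : dimH E ≤ ENNReal.ofReal s := by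
  have hsum : ∀ k, ∑ i, Metric.ediam (U k i) ^ s ≤ N k * r k ^ s := fun k =>
    calc ∑ i, Metric.ediam (U k i) ^ s ≤ ∑ _i : Fin (N k), r k ^ s :=
          Finset.sum_le_sum fun i _ => ENNReal.rpow_le_rpow (hU k i) hs
      _ = N k * r k ^ s := by simp
  have hμ : μH[s] E ≤ B :=
    (Measure.hausdorffMeasure_le_liminf_sum s E r hr U (.of_forall hU) hE).trans <|
      liminf_le_of_frequently_le' <| hfreq.mono fun k hk => (hsum k).trans hk
  refine dimH_le_of_hausdorffMeasure_ne_top (d := s.toNNReal) ?_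
  rw [Real.coe_toNNReal s hs]
  exact (hμ.trans_lt hB.lt_top).ne

theorem le_dimH_of_forall_measure_le_ediam_rpow {X : Type*} [EMetricSpace X] [MeasurableSpace X]
    [BorelSpace X] (μ : Measure X) {E : Set X} (hE : μ E ≠ 0) {s : ℝ} (hs : 0 ≤ s)
    {c ε : ℝ≥0∞} (hc : c ≠ ∞) (hε : 0 < ε)
    (h : ∀ T, Metric.ediam T ≤ ε → μ T ≤ c * Metric.ediam T ^ s) :
    ENNReal.ofReal s ≤ dimH E := by
  have hc0 : c + 1 ≠ 0 := by simp
  have hc1 : c + 1 ≠ ∞ := by simp [hc]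
  have hle : (c + 1)⁻¹ • μ ≤ μH[s] := by
    refine Measure.le_hausdorffMeasure s _ ε hε fun T hT => ?_
    rw [Measure.smul_apply, smul_eq_mul, ENNReal.inv_mul_le_iff hc0 hc1]
    exact (h T hT).trans (by gcongr; exact le_self_add)
  refine le_dimH_of_hausdorffMeasure_ne_zero (d := s.toNNReal) ?_
  rw [Real.coe_toNNReal s hs]
  refine fun h0 => mul_ne_zero (ENNReal.inv_ne_zero.2 hc1) hE ?_
  simpa [h0] using Measure.le_iff'.1 hle E

namespace Moran

def count (nk : ℕ → ℕ) (k : ℕ) : ℕ := ∏ i ∈ Finset.range k, nk i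

def scale (ck : ℕ → ℝ) (k : ℕ) : ℝ := ∏ i ∈ Finset.range k, ck i

section Products

variable {nk : ℕ → ℕ} {ck : ℕ → ℝ}

theorem count_succ (k : ℕ) : count nk (k + 1) = count nk k * nk k := Finset.prod_range_succ _ _

theorem scale_succ (k : ℕ) : scale ck (k + 1) = scale ck k * ck k := Finset.prod_range_succ _ _

theorem count_pos (hnk : ∀ k, 0 < nk k) (k : ℕ) : 0 < count nk k :=
  Finset.prod_pos fun i _ => hnk i

theorem scale_pos (hck : ∀ k, 0 < ck k) (k : ℕ) : 0 < scale ck k :=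
  Finset.prod_pos fun i _ => hck i

theorem strictMono_count (hnk : ∀ k, 2 ≤ nk k) : StrictMono (count nk) :=
  strictMono_nat_of_lt_succ fun k => by
    rw [count_succ]
    exact lt_mul_of_one_lt_right (count_pos (fun i => by linarith [hnk i]) k) (hnk k)

theorem tendsto_count (hnk : ∀ k, 2 ≤ nk k) : Tendsto (count nk) atTop atTop :=
  (strictMono_count hnk).tendsto_atTop

theorem one_lt_count (hnk : ∀ k, 2 ≤ nk k) {k : ℕ} (hk : 1 ≤ k) : 1 < (count nk k : ℝ) := by
  exact_mod_cast (strictMono_count hnk hk).trans_eq' rfl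

theorem count_mul_scale_le_one (hck : ∀ k, 0 < ck k) (hrest : ∀ k, (nk k : ℝ) * ck k ≤ 1)
    (k : ℕ) : (count nk k : ℝ) * scale ck k ≤ 1 := by
  rw [count, scale, Nat.cast_prod, ← Finset.prod_mul_distrib]
  exact Finset.prod_le_one (fun i _ => by have := hck i; positivity) fun i _ => hrest i

theorem tendsto_scale (hnk : ∀ k, 2 ≤ nk k) (hck : ∀ k, 0 < ck k)
    (hrest : ∀ k, (nk k : ℝ) * ck k ≤ 1) : Tendsto (scale ck) atTop (𝓝 0) := by
  refine squeeze_zero (fun k => (scale_pos hck k).le) (fun k => ?_)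
    ((tendsto_const_div_atTop_nhds_zero_nat 1).comp (tendsto_count hnk))
  have hN : (0 : ℝ) < count nk k := by exact_mod_cast count_pos (fun i => by linarith [hnk i]) k
  rw [Function.comp_apply, le_div_iff₀ hN, mul_comm]
  exact count_mul_scale_le_one hck hrest k

end Products

def addr (nk : ℕ → ℕ) : ℕ → ℕ → List ℕ
  | 0, _ => []
  | k + 1, m => addr nk k (m / nk k) ++ [m % nk k]

section Addresses

variable {nk : ℕ → ℕ}

theorem addr_succ (k m : ℕ) : addr nk (k + 1) m = addr nk k (m / nk k) ++ [m % nk k] := rfl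

@[simp]
theorem length_addr (k m : ℕ) : (addr nk k m).length = k := by
  induction k generalizing m with
  | zero => rfl
  | succ k ih => simp [addr_succ, ih]

theorem validAddr_append_singleton {l : List ℕ} {i : ℕ} :
    ValidAddr nk (l ++ [i]) ↔ ValidAddr nk l ∧ i < nk l.length := by
  simp only [ValidAddr, List.get_eq_getElem, List.length_append, List.length_singleton]
  constructor
  · intro h
    exact ⟨fun j hj => by simpa [List.getElem_append_left hj] using h j (by omega),
      by simpa using h l.length (by omega)⟩
  · rintro ⟨h, hi⟩ j hj
    rcases (Nat.lt_succ_iff.1 hj).lt_or_eq with hj | rfl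
    · simpa [List.getElem_append_left hj] using h j hj
    · simpa using hi

theorem validAddr_addr (hnk : ∀ k, 0 < nk k) (k m : ℕ) : ValidAddr nk (addr nk k m) := by
  induction k generalizing m with
  | zero => exact fun j h => absurd h (Nat.not_lt_zero _)
  | succ k ih =>
    rw [addr_succ, validAddr_append_singleton, length_addr]
    exact ⟨ih _, Nat.mod_lt _ (hnk k)⟩

theorem exists_addr_eq (hnk : ∀ k, 0 < nk k) {l : List ℕ} (hl : ValidAddr nk l) :
    ∃ m < count nk l.length, addr nk l.length m = l := by
  induction l using List.reverseRecOn with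
  | nil => exact ⟨0, count_pos hnk 0, rfl⟩
  | append_singleton l i ih =>
    obtain ⟨hl, hi⟩ := validAddr_append_singleton.1 hl
    obtain ⟨m, hm, hml⟩ := ih hl
    refine ⟨nk l.length * m + i, ?_, ?_⟩
    · simp only [List.length_append, List.length_singleton, count_succ]
      nlinarith
    · simp only [List.length_append, List.length_singleton, addr_succ,
        Nat.mul_add_div (hnk _), Nat.div_eq_of_lt hi, Nat.mul_add_mod, Nat.mod_eq_of_lt hi,
        add_zero, hml]

end Addresses

section Geometry

variable {J : Set ℝ} {u δ : ℝ} {nk : ℕ → ℕ} {ck : ℕ → ℝ} {Js : List ℕ → Set ℝ}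

theorem exists_basic_eq_Icc (hδ : 0 < δ) (hck : ∀ k, 0 < ck k)
    (hM : HomogMoranStructure (Set.Icc u (u + δ)) nk ck Js) {l : List ℕ} (hl : ValidAddr nk l) :
    ∃ a, Js l = Set.Icc a (a + δ * scale ck l.length) := by
  induction l using List.reverseRecOn with
  | nil => exact ⟨u, by simp [hM.1, scale]⟩
  | append_singleton l i ih =>
    obtain ⟨hl, hi⟩ := validAddr_append_singleton.1 hl
    obtain ⟨a', hl'⟩ := ih hl
    obtain ⟨a, b, hab, hJ⟩ := hM.2.2.2.2 l hl i hi
    have hvol := hM.2.2.2.1 l hl i hi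
    have hpos := mul_pos (hck l.length) (mul_pos hδ (scale_pos hck l.length))
    rw [hJ, hl', Real.volume_Icc, Real.volume_Icc, add_sub_cancel_left,
      ← ENNReal.ofReal_mul (hck _).le, ENNReal.ofReal_eq_ofReal_iff (sub_nonneg.2 hab) hpos.le] at hvol
    refine ⟨a, ?_⟩
    rw [hJ, List.length_append, List.length_singleton, scale_succ]
    congr 1
    linear_combination hvol

theorem basic_eq_Icc (hδ : 0 < δ) (hck : ∀ k, 0 < ck k)
    (hM : HomogMoranStructure (Set.Icc u (u + δ)) nk ck Js) {l : List ℕ} (hl : ValidAddr nk l) :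
    Js l = Set.Icc (sInf (Js l)) (sInf (Js l) + δ * scale ck l.length) := by
  obtain ⟨a, ha⟩ := exists_basic_eq_Icc hδ hck hM hl
  have := mul_pos hδ (scale_pos hck l.length)
  rw [ha, csInf_Icc (by linarith)]

theorem sInf_mem_basic (hδ : 0 < δ) (hck : ∀ k, 0 < ck k)
    (hM : HomogMoranStructure (Set.Icc u (u + δ)) nk ck Js) {l : List ℕ} (hl : ValidAddr nk l) :
    sInf (Js l) ∈ Js l := by
  obtain ⟨a, ha⟩ := exists_basic_eq_Icc hδ hck hM hl
  have := mul_pos hδ (scale_pos hck l.length)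
  rw [ha, csInf_Icc (by linarith)]
  exact ⟨le_rfl, by linarith⟩

theorem basic_addr_succ_subset (hnk : ∀ k, 0 < nk k) (hM : HomogMoranStructure J nk ck Js)
    (k m : ℕ) : Js (addr nk (k + 1) m) ⊆ Js (addr nk k (m / nk k)) :=
  hM.2.1 _ (validAddr_addr hnk k _) _ (by rw [length_addr]; exact Nat.mod_lt _ (hnk k))

theorem div_lt_count {k m : ℕ} (hm : m < count nk (k + 1)) :
    m / nk k < count nk k :=
  Nat.div_lt_of_lt_mul (by rwa [count_succ, mul_comm] at hm)

theorem disjoint_interior_basic (hnk : ∀ k, 0 < nk k) (hM : HomogMoranStructure J nk ck Js)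
    {k m m' : ℕ} (hm : m < count nk k) (hm' : m' < count nk k) (hne : m ≠ m') :
    Disjoint (interior (Js (addr nk k m))) (interior (Js (addr nk k m'))) := by
  induction k generalizing m m' with
  | zero => simp [count] at hm hm'; omega
  | succ k ih =>
    by_cases hq : m / nk k = m' / nk k
    · have hr : m % nk k ≠ m' % nk k := fun hr => hne <| by
        rw [← Nat.div_add_mod m (nk k), ← Nat.div_add_mod m' (nk k), hq, hr]
      have hlt : ∀ n, n % nk k < nk (addr nk k (m' / nk k)).length := fun n => by
        rw [length_addr]; exact Nat.mod_lt _ (hnk k)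
      rw [addr_succ, addr_succ, hq, Set.disjoint_iff_inter_eq_empty]
      exact hM.2.2.1 _ (validAddr_addr hnk k _) _ _ (hlt m) (hlt m') hr
    · exact (ih (div_lt_count hm) (div_lt_count hm') hq).mono
        (interior_mono (basic_addr_succ_subset hnk hM k m))
        (interior_mono (basic_addr_succ_subset hnk hM k m'))

end Geometry

def code (nk : ℕ → ℕ) (k : ℕ) (x : ℝ) : List ℕ := addr nk k ⌊x * count nk k⌋₊

def codePoint (nk : ℕ → ℕ) (Js : List ℕ → Set ℝ) (x : ℝ) : ℝ :=
  limUnder atTop fun k => sInf (Js (code nk k x))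

section Coding

variable {J : Set ℝ} {u δ : ℝ} {nk : ℕ → ℕ} {ck : ℕ → ℝ} {Js : List ℕ → Set ℝ}

theorem floor_mul_count_succ_div (hnk : ∀ k, 0 < nk k) (k : ℕ) (x : ℝ) :
    ⌊x * count nk (k + 1)⌋₊ / nk k = ⌊x * count nk k⌋₊ := by
  rw [← Nat.floor_div_natCast, count_succ, Nat.cast_mul, ← mul_assoc,
    mul_div_cancel_right₀ _ (Nat.cast_ne_zero.2 (hnk k).ne')]

theorem antitone_basic_code (hnk : ∀ k, 0 < nk k) (hM : HomogMoranStructure J nk ck Js)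
    (x : ℝ) : Antitone fun k => Js (code nk k x) :=
  antitone_nat_of_succ_le fun k =>
    (basic_addr_succ_subset hnk hM k _).trans_eq (by rw [floor_mul_count_succ_div hnk]; rfl)

variable (hδ : 0 < δ) (hnk : ∀ k, 2 ≤ nk k) (hck : ∀ k, 0 < ck k)
  (hrest : ∀ k, (nk k : ℝ) * ck k ≤ 1) (hM : HomogMoranStructure (Set.Icc u (u + δ)) nk ck Js)
include hδ hnk hck hrest hM

theorem tendsto_codePoint (x : ℝ) :
    Tendsto (fun k => sInf (Js (code nk k x))) atTop (𝓝 (codePoint nk Js x)) := by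
  have hnk0 : ∀ k, 0 < nk k := fun k => two_pos.trans_le (hnk k)
  have hmem : ∀ n K, K ≤ n → sInf (Js (code nk n x)) ∈ Js (code nk K x) := fun n K h =>
    antitone_basic_code hnk0 hM x h (sInf_mem_basic hδ hck hM (validAddr_addr hnk0 n _))
  refine (cauchySeq_of_le_tendsto_0 (fun k => δ * scale ck k) (fun n m K hn hm => ?_)
    (by simpa using (tendsto_scale hnk hck hrest).const_mul δ)).tendsto_limUnder
  have hK := basic_eq_Icc hδ hck hM (validAddr_addr hnk0 K ⌊x * count nk K⌋₊)
  rw [length_addr] at hK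
  have h := Real.dist_le_of_mem_Icc (hK ▸ hmem n K hn) (hK ▸ hmem m K hm)
  rwa [add_sub_cancel_left] at h

theorem codePoint_mem_basic (k : ℕ) (x : ℝ) : codePoint nk Js x ∈ Js (code nk k x) := by
  have hnk0 : ∀ k, 0 < nk k := fun k => two_pos.trans_le (hnk k)
  have hclosed : IsClosed (Js (code nk k x)) := by
    rw [code, basic_eq_Icc hδ hck hM (validAddr_addr hnk0 k _)]
    exact isClosed_Icc
  exact hclosed.mem_of_tendsto (tendsto_codePoint hδ hnk hck hrest hM x) <|
    (eventually_ge_atTop k).mono fun j hj =>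
      antitone_basic_code hnk0 hM x hj (sInf_mem_basic hδ hck hM (validAddr_addr hnk0 j _))

theorem codePoint_mem_moranSet (x : ℝ) : codePoint nk Js x ∈ MoranSet nk Js := by
  have hnk0 : ∀ k, 0 < nk k := fun k => two_pos.trans_le (hnk k)
  simp only [MoranSet, Set.mem_iInter, Set.mem_iUnion]
  exact fun k _ => ⟨code nk k x, ⟨length_addr k _, validAddr_addr hnk0 k _⟩,
    codePoint_mem_basic hδ hnk hck hrest hM k x⟩

theorem measurable_codePoint : Measurable (codePoint nk Js) :=
  measurable_of_tendsto_metrizable (f := fun k x => sInf (Js (code nk k x)))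
    (fun k => (measurable_from_top (f := fun m => sInf (Js (addr nk k m)))).comp
      (Nat.measurable_floor.comp (measurable_id.mul_const _)))
    (tendsto_pi_nhds.2 (tendsto_codePoint hδ hnk hck hrest hM))

end Coding

def moranMeasure (nk : ℕ → ℕ) (Js : List ℕ → Set ℝ) : Measure ℝ :=
  (volume.restrict (Set.Ico (0 : ℝ) 1)).map (codePoint nk Js)

def touching (nk : ℕ → ℕ) (Js : List ℕ → Set ℝ) (k : ℕ) (T : Set ℝ) : Finset ℕ :=
  {m ∈ Finset.range (count nk k) | (Js (addr nk k m) ∩ T).Nonempty}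

section Counting

variable {J : Set ℝ} {u δ : ℝ} {nk : ℕ → ℕ} {ck : ℕ → ℝ} {Js : List ℕ → Set ℝ}

theorem card_touching_Icc_le (hδ : 0 < δ) (hnk : ∀ k, 0 < nk k) (hck : ∀ k, 0 < ck k)
    (hM : HomogMoranStructure (Set.Icc u (u + δ)) nk ck Js) (k : ℕ) (y : ℝ) {w : ℝ}
    (hw : 0 ≤ w) :
    ((touching nk Js k (Set.Icc y (y + w))).card : ℝ) ≤ w / (δ * scale ck k) + 2 := by
  have hJ : ∀ m, Js (addr nk k m) = Set.Icc (sInf (Js (addr nk k m)))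
      (sInf (Js (addr nk k m)) + δ * scale ck k) := fun m => by
    simpa using basic_eq_Icc hδ hck hM (validAddr_addr hnk k m)
  refine Finset.card_le_of_disjoint_Ioo_of_meets_Icc hw (mul_pos hδ (scale_pos hck k))
    (fun i hi j hj hij => ?_) fun i hi => hJ i ▸ (Finset.mem_filter.1 hi).2
  have := disjoint_interior_basic hnk hM (Finset.mem_range.1 (Finset.mem_filter.1 hi).1)
    (Finset.mem_range.1 (Finset.mem_filter.1 hj).1) hij
  rwa [hJ i, hJ j, interior_Icc, interior_Icc] at this

theorem card_touching_succ_le (hnk : ∀ k, 0 < nk k) (hM : HomogMoranStructure J nk ck Js)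
    (k : ℕ) (T : Set ℝ) :
    (touching nk Js (k + 1) T).card ≤ nk k * (touching nk Js k T).card := by
  refine (Finset.card_le_mul_card_image (f := (· / nk k)) _ (nk k) fun q _ => ?_).trans
    (Nat.mul_le_mul_left _ (Finset.card_le_card fun q hq => ?_))
  · calc _ ≤ (Finset.Ico (nk k * q) (nk k * q + nk k)).card :=
          Finset.card_le_card fun m hm => by
            have h1 := Nat.div_add_mod m (nk k)
            have h2 := Nat.mod_lt m (hnk k)
            rw [(Finset.mem_filter.1 hm).2] at h1
            rw [Finset.mem_Ico]
            omega
      _ = nk k := by simp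
  · obtain ⟨m, hm, rfl⟩ := Finset.mem_image.1 hq
    obtain ⟨hmN, z, hz, hzT⟩ := Finset.mem_filter.1 hm
    exact Finset.mem_filter.2 ⟨Finset.mem_range.2 (div_lt_count (Finset.mem_range.1 hmN)),
      z, basic_addr_succ_subset hnk hM k m hz, hzT⟩

theorem card_touching_succ_le_rpow (hδ : 0 < δ) (hnk : ∀ k, 0 < nk k) (hck : ∀ k, 0 < ck k)
    (hM : HomogMoranStructure (Set.Icc u (u + δ)) nk ck Js) {s : ℝ} (hs0 : 0 ≤ s) (hs1 : s ≤ 1)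
    {k : ℕ} (y : ℝ) {d : ℝ} (hd1 : δ * scale ck (k + 1) ≤ d) (hd : d < δ * scale ck k) :
    ((touching nk Js (k + 1) (Set.Icc y (y + d))).card : ℝ) ≤
      6 * (nk k ^ (1 - s) * (d / (δ * scale ck (k + 1))) ^ s) := by
  set L := δ * scale ck (k + 1)
  have hL : 0 < L := mul_pos hδ (scale_pos hck _)
  have hd0 : 0 ≤ d := hL.le.trans hd1
  have hparents : (touching nk Js k (Set.Icc y (y + d))).card ≤ 2 := by
    have h := card_touching_Icc_le hδ hnk hck hM k y hd0
    have := (div_lt_one (hd0.trans_lt hd)).2 hd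
    have : ((touching nk Js k (Set.Icc y (y + d))).card : ℝ) < 3 := by linarith
    exact Nat.lt_succ_iff.1 (by exact_mod_cast this)
  have hA1 : ((touching nk Js (k + 1) (Set.Icc y (y + d))).card : ℝ) ≤ 2 * nk k := by
    have := (card_touching_succ_le hnk hM k _).trans (Nat.mul_le_mul_left (nk k) hparents)
    rw [mul_comm] at this
    exact_mod_cast this
  have hA2 : ((touching nk Js (k + 1) (Set.Icc y (y + d))).card : ℝ) ≤ 3 * (d / L) := by
    have h := card_touching_Icc_le hδ hnk hck hM (k + 1) y hd0
    have := (one_le_div hL).2 hd1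
    linarith
  have h2 : (2 : ℝ) ^ (1 - s) ≤ 2 := by
    simpa using Real.rpow_le_rpow_of_exponent_le one_le_two (by linarith : 1 - s ≤ 1)
  have h3 : (3 : ℝ) ^ s ≤ 3 := by
    simpa using Real.rpow_le_rpow_of_exponent_le (by norm_num : (1 : ℝ) ≤ 3) hs1
  calc _ ≤ (2 * nk k) ^ (1 - s) * (3 * (d / L)) ^ s :=
        Real.le_rpow_mul_rpow_of_le_of_le (Nat.cast_nonneg _) hA1 hA2 hs0 hs1
    _ = 2 ^ (1 - s) * 3 ^ s * (nk k ^ (1 - s) * (d / L) ^ s) := by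
        rw [Real.mul_rpow (by norm_num) (Nat.cast_nonneg _),
          Real.mul_rpow (by norm_num) (div_nonneg hd0 hL.le)]
        ring
    _ ≤ (2 * 3) * (nk k ^ (1 - s) * (d / L) ^ s) := by gcongr
    _ = _ := by norm_num

end Counting

section Measure

variable {u δ : ℝ} {nk : ℕ → ℕ} {ck : ℕ → ℝ} {Js : List ℕ → Set ℝ}
  (hδ : 0 < δ) (hnk : ∀ k, 2 ≤ nk k) (hck : ∀ k, 0 < ck k)
  (hrest : ∀ k, (nk k : ℝ) * ck k ≤ 1) (hM : HomogMoranStructure (Set.Icc u (u + δ)) nk ck Js)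
include hδ hnk hck hrest hM

theorem moranMeasure_moranSet_ne_zero : moranMeasure nk Js (MoranSet nk Js) ≠ 0 := by
  refine (lt_of_lt_of_le ?_ (Measure.le_map_apply
    (measurable_codePoint hδ hnk hck hrest hM).aemeasurable _)).ne'
  have huniv : codePoint nk Js ⁻¹' MoranSet nk Js = Set.univ :=
    Set.eq_univ_of_forall (codePoint_mem_moranSet hδ hnk hck hrest hM)
  rw [huniv, Measure.restrict_apply_univ, Real.volume_Ico]
  simp

theorem moranMeasure_le_card_touching {T : Set ℝ} (hT : MeasurableSet T) (k : ℕ) :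
    moranMeasure nk Js T ≤ ENNReal.ofReal ((touching nk Js k T).card / count nk k) := by
  have hmeas := measurable_codePoint hδ hnk hck hrest hM
  have hN : (0 : ℝ) < count nk k := by
    exact_mod_cast count_pos (fun i => two_pos.trans_le (hnk i)) k
  have hsub : codePoint nk Js ⁻¹' T ∩ Set.Ico 0 1 ⊆
      ⋃ m ∈ touching nk Js k T, Set.Ico ((m : ℝ) / count nk k) ((m + 1) / count nk k) := by
    rintro x ⟨hxT, hx0, hx1⟩
    have hxN : 0 ≤ x * count nk k := by positivity
    refine Set.mem_biUnion (x := ⌊x * count nk k⌋₊) (Finset.mem_filter.2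
      ⟨Finset.mem_range.2 ((Nat.floor_lt hxN).2 (by nlinarith)), codePoint nk Js x,
        codePoint_mem_basic hδ hnk hck hrest hM k x, hxT⟩) ⟨?_, ?_⟩
    · rw [div_le_iff₀ hN]; exact Nat.floor_le hxN
    · rw [lt_div_iff₀ hN]; exact Nat.lt_floor_add_one _
  rw [moranMeasure, Measure.map_apply hmeas hT, Measure.restrict_apply (hmeas hT)]
  calc _ ≤ _ := measure_mono hsub
    _ ≤ _ := measure_biUnion_finset_le _ _
    _ = _ := by
      simp only [Real.volume_Ico, add_div, add_sub_cancel_left, Finset.sum_const, nsmul_eq_mul]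
      rw [← ENNReal.ofReal_natCast, ← ENNReal.ofReal_mul (Nat.cast_nonneg _), mul_one_div]

theorem moranMeasure_singleton (y : ℝ) : moranMeasure nk Js {y} = 0 := by
  have hle : ∀ k, moranMeasure nk Js {y} ≤ ENNReal.ofReal (2 / count nk k) := fun k => by
    have h := card_touching_Icc_le hδ (fun i => two_pos.trans_le (hnk i)) hck hM k y le_rfl
    rw [zero_div, zero_add, add_zero, Set.Icc_self] at h
    exact (moranMeasure_le_card_touching hδ hnk hck hrest hM (measurableSet_singleton y) k).trans
      (ENNReal.ofReal_le_ofReal (div_le_div_of_nonneg_right h (Nat.cast_nonneg _)))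
  have hlim : Tendsto (fun k => ENNReal.ofReal (2 / count nk k)) atTop (𝓝 0) := by
    simpa using ENNReal.tendsto_ofReal
      ((tendsto_const_div_atTop_nhds_zero_nat 2).comp (tendsto_count hnk))
  exact le_antisymm (ge_of_tendsto' hlim hle) zero_le

end Measure

section Dimension

variable {u δ : ℝ} {nk : ℕ → ℕ} {ck : ℕ → ℝ} {Js : List ℕ → Set ℝ}
  (hδ : 0 < δ) (hnk : ∀ k, 2 ≤ nk k) (hck : ∀ k, 0 < ck k)
  (hrest : ∀ k, (nk k : ℝ) * ck k ≤ 1) (hM : HomogMoranStructure (Set.Icc u (u + δ)) nk ck Js)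
include hδ hnk hck hrest hM

theorem moranMeasure_Icc_le {s : ℝ} (hs0 : 0 ≤ s) (hs1 : s ≤ 1) {K : ℕ}
    (hK : ∀ k ≥ K, 1 ≤ (count nk k : ℝ) * (scale ck (k + 1) * nk k) ^ s) (y : ℝ) {d : ℝ}
    (hd : 0 < d) (hdK : d < δ * scale ck K) :
    moranMeasure nk Js (Set.Icc y (y + d)) ≤ ENNReal.ofReal (6 / δ ^ s * d ^ s) := by
  have hnk0 : ∀ k, 0 < nk k := fun k => two_pos.trans_le (hnk k)
  obtain ⟨k, hKk, hdk1, hdk⟩ := exists_le_lt_of_tendsto_zero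
    (by simpa using (tendsto_scale hnk hck hrest).const_mul δ) hd hdK
  refine (moranMeasure_le_card_touching hδ hnk hck hrest hM measurableSet_Icc (k + 1)).trans
    (ENNReal.ofReal_le_ofReal ?_)
  have hn : (0 : ℝ) < nk k := by exact_mod_cast hnk0 k
  have hC := scale_pos hck (k + 1)
  have hN : (0 : ℝ) < count nk k := by exact_mod_cast count_pos hnk0 k
  have hCn : 0 < (scale ck (k + 1) * nk k) ^ s := by positivity
  have hsplit : (nk k : ℝ) ^ (1 - s) * (d / (δ * scale ck (k + 1))) ^ s =
      nk k * (d ^ s / δ ^ s) / (scale ck (k + 1) * nk k) ^ s := by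
    rw [Real.rpow_sub hn, Real.rpow_one, Real.div_rpow hd.le (by positivity),
      Real.mul_rpow hδ.le hC.le, Real.mul_rpow hC.le hn.le]
    field_simp
  rw [count_succ, Nat.cast_mul, div_le_iff₀ (by positivity)]
  calc _ ≤ 6 * (nk k * (d ^ s / δ ^ s) / (scale ck (k + 1) * nk k) ^ s) :=
        hsplit ▸ card_touching_succ_le_rpow hδ hnk0 hck hM hs0 hs1 y hdk1 hdk
    _ ≤ 6 / δ ^ s * d ^ s * (count nk k * nk k) := by
        rw [mul_div_assoc', div_le_iff₀ hCn]
        calc 6 * (nk k * (d ^ s / δ ^ s)) = 6 / δ ^ s * d ^ s * nk k * 1 := by ring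
          _ ≤ 6 / δ ^ s * d ^ s * nk k * (count nk k * (scale ck (k + 1) * nk k) ^ s) := by
              gcongr
              exact hK k hKk
          _ = _ := by ring

theorem le_dimH_moranSet {s : ℝ} (hs0 : 0 ≤ s) (hs1 : s ≤ 1)
    (hK : ∀ᶠ k in atTop, 1 ≤ (count nk k : ℝ) * (scale ck (k + 1) * nk k) ^ s) :
    ENNReal.ofReal s ≤ dimH (MoranSet nk Js) := by
  obtain ⟨K, hK⟩ := eventually_atTop.1 hK
  have hLK := mul_pos hδ (scale_pos hck K)
  refine le_dimH_of_forall_measure_le_ediam_rpow (moranMeasure nk Js)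
    (moranMeasure_moranSet_ne_zero hδ hnk hck hrest hM) hs0 (c := ENNReal.ofReal (6 / δ ^ s))
    ENNReal.ofReal_ne_top (ε := ENNReal.ofReal (δ * scale ck K / 2)) (by simpa using hLK)
    fun T hT => ?_
  have hbdd : Bornology.IsBounded T :=
    Metric.isBounded_iff_ediam_ne_top.2 (ne_top_of_le_ne_top ENNReal.ofReal_ne_top hT)
  set d := sSup T - sInf T
  have hTd : T ⊆ Set.Icc (sInf T) (sInf T + d) := by
    simpa [d] using hbdd.subset_Icc_sInf_sSup
  rw [Real.ediam_eq hbdd] at hT ⊢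
  rcases le_or_gt d 0 with hd | hd
  · calc moranMeasure nk Js T ≤ moranMeasure nk Js {sInf T} :=
          measure_mono (hTd.trans fun z hz => le_antisymm (by linarith [hz.2]) hz.1)
      _ = 0 := moranMeasure_singleton hδ hnk hck hrest hM _
      _ ≤ _ := zero_le
  · have hdK : d < δ * scale ck K := by
      linarith [(ENNReal.ofReal_le_ofReal_iff (by positivity)).1 hT]
    calc moranMeasure nk Js T ≤ moranMeasure nk Js (Set.Icc (sInf T) (sInf T + d)) :=
          measure_mono hTd
      _ ≤ ENNReal.ofReal (6 / δ ^ s * d ^ s) :=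
          moranMeasure_Icc_le hδ hnk hck hrest hM hs0 hs1 hK _ hd hdK
      _ = _ := by
          rw [ENNReal.ofReal_mul (by positivity), ENNReal.ofReal_rpow_of_nonneg hd.le hs0]

theorem dimH_moranSet_le {s : ℝ} (hs : 0 ≤ s)
    (hfreq : ∃ᶠ k in atTop, (count nk k : ℝ) * scale ck k ^ s ≤ 1) :
    dimH (MoranSet nk Js) ≤ ENNReal.ofReal s := by
  have hnk0 : ∀ k, 0 < nk k := fun k => two_pos.trans_le (hnk k)
  refine dimH_le_of_frequently_card_mul_rpow_le hs
    (fun k (i : Fin (count nk k)) => Js (addr nk k i))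
    (r := fun k => ENNReal.ofReal (δ * scale ck k))
    (by simpa using ENNReal.tendsto_ofReal ((tendsto_scale hnk hck hrest).const_mul δ))
    (fun k i => ?_) ?_ (B := ENNReal.ofReal (δ ^ s)) ENNReal.ofReal_ne_top
    (hfreq.mono fun k hk => ?_)
  · rw [basic_eq_Icc hδ hck hM (validAddr_addr hnk0 k i), Real.ediam_Icc, length_addr,
      add_sub_cancel_left]
  · filter_upwards [eventually_ge_atTop 1] with k hk y hy
    simp only [MoranSet, Set.mem_iInter, Set.mem_iUnion, Set.mem_Ici, Set.mem_ofPred_eq] at hy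
    obtain ⟨l, ⟨rfl, hl⟩, hyl⟩ := hy k hk
    obtain ⟨m, hm, hml⟩ := exists_addr_eq hnk0 hl
    refine Set.mem_iUnion.2 ⟨⟨m, hm⟩, ?_⟩
    rwa [Fin.val_mk, hml]
  · have hL := mul_pos hδ (scale_pos hck k)
    rw [ENNReal.ofReal_rpow_of_pos hL, ← ENNReal.ofReal_natCast,
      ← ENNReal.ofReal_mul (Nat.cast_nonneg _)]
    refine ENNReal.ofReal_le_ofReal ?_
    calc (count nk k : ℝ) * (δ * scale ck k) ^ s = δ ^ s * (count nk k * scale ck k ^ s) := by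
          rw [Real.mul_rpow hδ.le (scale_pos hck k).le]; ring
      _ ≤ δ ^ s * 1 := by gcongr
      _ = δ ^ s := mul_one _

theorem liminf_le_dimH_moranSet :
    liminf (fun k => Real.log (count nk k) / -Real.log (scale ck (k + 1) * nk k)) atTop ≤
      (dimH (MoranSet nk Js)).toReal := by
  have hN1 : ∀ k, (1 : ℝ) ≤ count nk k := fun k => by
    exact_mod_cast count_pos (fun i => two_pos.trans_le (hnk i)) k
  have hx : ∀ k, 0 < scale ck (k + 1) * nk k := fun k => by
    have := scale_pos hck (k + 1)
    have : (0 : ℝ) < nk k := by exact_mod_cast two_pos.trans_le (hnk k)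
    positivity
  have hNx : ∀ k, (count nk k : ℝ) * (scale ck (k + 1) * nk k) ≤ 1 := fun k => by
    have := count_mul_scale_le_one hck hrest (k + 1)
    rw [count_succ, Nat.cast_mul] at this
    linarith
  have hx1 : ∀ k, scale ck (k + 1) * nk k ≤ 1 := fun k => by nlinarith [hN1 k, hNx k, hx k]
  refine le_of_forall_lt_imp_le_of_dense fun s hs => ?_
  rcases le_or_gt s 0 with hs0 | hs0
  · exact hs0.trans ENNReal.toReal_nonneg
  have hev := eventually_lt_of_lt_liminf hs (isBoundedUnder_of_eventually_ge
    (.of_forall fun k => Real.log_div_neg_log_nonneg (hN1 k) (hx k).le (hx1 k)))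
  obtain ⟨k, hk⟩ := hev.exists
  have hs1 : s ≤ 1 := hk.le.trans (Real.log_div_neg_log_le_one (hN1 k) (hx k) (hNx k))
  have hdim := le_dimH_moranSet hδ hnk hck hrest hM hs0.le hs1 <| by
    filter_upwards [hev, eventually_ge_atTop 1] with k hk hk1
    have := one_lt_count hnk hk1
    have hxk : scale ck (k + 1) * nk k < 1 := by nlinarith [hNx k, hx k]
    exact ((Real.lt_log_div_neg_log_iff (by positivity) (hx k) hxk).1 hk).le
  have hfin : dimH (MoranSet nk Js) ≠ ⊤ :=
    ((dimH_mono (Set.subset_univ _)).trans_eq Real.dimH_univ).trans_lt ENNReal.one_lt_top |>.ne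
  exact (ENNReal.ofReal_le_iff_le_toReal hfin).1 hdim

theorem dimH_moranSet_le_liminf :
    (dimH (MoranSet nk Js)).toReal ≤
      liminf (fun k => Real.log (count nk k) / -Real.log (scale ck k)) atTop := by
  have hN1 : ∀ k, (1 : ℝ) ≤ count nk k := fun k => by
    exact_mod_cast count_pos (fun i => two_pos.trans_le (hnk i)) k
  have hNC := count_mul_scale_le_one hck hrest
  refine le_of_forall_gt_imp_ge_of_dense fun s hs => ?_
  have hfreq := frequently_lt_of_liminf_lt (isCoboundedUnder_ge_of_eventually_le atTop
    (.of_forall fun k => Real.log_div_neg_log_le_one (hN1 k) (scale_pos hck k) (hNC k))) hs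
  obtain ⟨k, hk⟩ := hfreq.exists
  have hs0 : 0 ≤ s := by
    refine (Real.log_div_neg_log_nonneg (hN1 k) (scale_pos hck k).le ?_).trans hk.le
    nlinarith [hN1 k, hNC k, scale_pos hck k]
  refine ENNReal.toReal_le_of_le_ofReal hs0 (dimH_moranSet_le hδ hnk hck hrest hM hs0 ?_)
  refine (hfreq.and_eventually (eventually_ge_atTop 1)).mono fun k ⟨hk, hk1⟩ => ?_
  have := one_lt_count hnk hk1
  have hC1 : scale ck k < 1 := by nlinarith [hNC k, scale_pos hck k]
  exact ((Real.log_div_neg_log_lt_iff (by positivity) (scale_pos hck k) hC1).1 hk).le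

end Dimension

end Moran

theorem moran_dimH_bounds_general (u δ : ℝ) (hδ : 0 < δ) (nk : ℕ → ℕ) (ck : ℕ → ℝ)
    (Js : List ℕ → Set ℝ)
    (hnk : ∀ k, 2 ≤ nk k) (hck : ∀ k, 0 < ck k ∧ ck k < 1)
    (hrest : ∀ k, (nk k : ℝ) * ck k ≤ 1)
    (hMoran : HomogMoranStructure (Set.Icc u (u + δ)) nk ck Js) :
    (Filter.liminf (fun k =>
        Real.log (∏ i ∈ Finset.range k, (nk i : ℝ)) /
          (-Real.log ((∏ i ∈ Finset.range (k + 1), ck i) * nk k))) atTop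
      ≤ (dimH (MoranSet nk Js)).toReal) ∧
    (dimH (MoranSet nk Js)).toReal
      ≤ Filter.liminf (fun k =>
          Real.log (∏ i ∈ Finset.range k, (nk i : ℝ)) /
            (-Real.log (∏ i ∈ Finset.range k, ck i))) atTop := by
  have hcount : ∀ k, ∏ i ∈ Finset.range k, (nk i : ℝ) = Moran.count nk k :=
    fun k => (Nat.cast_prod _ _).symm
  simp only [hcount]
  exact ⟨Moran.liminf_le_dimH_moranSet hδ hnk (fun k => (hck k).1) hrest hMoran,
    Moran.dimH_moranSet_le_liminf hδ hnk (fun k => (hck k).1) hrest hMoran⟩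

theorem moran_dimH_bounds (u δ : ℝ) (hδ : 0 < δ) (nk : ℕ → ℕ) (ck : ℕ → ℝ)
    (Js : List ℕ → Set ℝ)
    (hnk : ∀ k, 2 ≤ nk k) (hck : ∀ k, 0 < ck k ∧ ck k < 1)
    (hfirst : (nk 0 : ℝ) * ck 0 ≤ δ) (hrest : ∀ k, (nk k : ℝ) * ck k ≤ 1)
    (hMoran : HomogMoranStructure (Set.Icc u (u + δ)) nk ck Js) :
    (Filter.liminf (fun k =>
        Real.log (∏ i ∈ Finset.range k, (nk i : ℝ)) /
          (-Real.log ((∏ i ∈ Finset.range (k + 1), ck i) * nk k))) atTop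
      ≤ (dimH (MoranSet nk Js)).toReal) ∧
    (dimH (MoranSet nk Js)).toReal
      ≤ Filter.liminf (fun k =>
          Real.log (∏ i ∈ Finset.range k, (nk i : ℝ)) /
            (-Real.log (∏ i ∈ Finset.range k, ck i))) atTop :=
  moran_dimH_bounds_general u δ hδ nk ck Js hnk hck hrest hMoran
end
end

section
/- Let $Q = (q_n)$ be a basic sequence with $q_n \to \infty$ and $\lim_{n\to\infty} (\log q_n)/(\sum_{i=1}^n \log q_i) = 0$, and let $S \subseteq \mathbb{N}$ be such that the mass dimension $\gamma = \dim_M(S)$ exists. Then the set of real numbers all of whose $Q$-Cantor series digits lie in $S$, i.e., $\{x : E_n(x) \in S \text{ for all } n \ge 1\}$, has Hausdorff dimension at most $\gamma$. -/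
open scoped Classical
open Filter MeasureTheory

noncomputable section

/-- Product of the first `n` bases of a basic sequence. -/
def cantorProd (q : ℕ → ℕ) (n : ℕ) : ℝ := ∏ i ∈ Finset.range n, (q i : ℝ)

/-- `E` is the sequence of digits of the `Q`-Cantor series expansion of `x`
(the digit `E n` is the digit `E_{n+1}` of the paper, in base `q n = q_{n+1}`). -/
def IsCantorExp (q : ℕ → ℕ) (x : ℝ) (E : ℕ → ℕ) : Prop :=
  (∀ n, E n < q n) ∧ (∀ m, ∃ n, m ≤ n ∧ E n ≠ q n - 1) ∧
  x = (⌊x⌋ : ℝ) + ∑' n, (E n : ℝ) / cantorProd q (n + 1)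

/-- Number of occurrences of the block `B` of length `k` among the first `n` digits. -/
def blockCount (E : ℕ → ℕ) (k : ℕ) (B : Fin k → ℕ) (n : ℕ) : ℕ :=
  ((Finset.range (n + 1 - k)).filter (fun j => ∀ i : Fin k, E (j + i) = B i)).card

/-- `Q_n^{(k)}`. -/
def Qnk (q : ℕ → ℕ) (k n : ℕ) : ℝ :=
  ∑ j ∈ Finset.range n, 1 / ∏ i ∈ Finset.range k, (q (j + i) : ℝ)

/-- `x` is `Q`-normal of order `k`. -/
def QNormalOrder (q : ℕ → ℕ) (k : ℕ) (x : ℝ) : Prop :=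
  ∃ E, IsCantorExp q x E ∧ ∀ B : Fin k → ℕ,
    Tendsto (fun n => (blockCount E k B n : ℝ) / Qnk q k n) atTop (nhds 1)

/-- `x` is `Q`-ratio normal of order `k`. -/
def QRatioNormalOrder (q : ℕ → ℕ) (k : ℕ) (x : ℝ) : Prop :=
  ∃ E, IsCantorExp q x E ∧ ∀ B₁ B₂ : Fin k → ℕ,
    Tendsto (fun n => (blockCount E k B₁ n : ℝ) / (blockCount E k B₂ n : ℝ))
      atTop (nhds 1)

/-- A sequence of reals is uniformly distributed mod 1. -/
def UDMod1 (u : ℕ → ℝ) : Prop :=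
  ∀ a b : ℝ, 0 ≤ a → a ≤ b → b ≤ 1 →
    Tendsto
      (fun N => (((Finset.range N).filter
          (fun n => Int.fract (u n) ∈ Set.Ico a b)).card : ℝ) / N)
      atTop (nhds (b - a))

/-- `x` is `Q`-distribution normal. -/
def QDistNormal (q : ℕ → ℕ) (x : ℝ) : Prop :=
  UDMod1 (fun n => cantorProd q n * x)

/-!
For each `n`, the numbers in `[0, 1]` whose digits all lie in `S` are covered by one interval of
length `1 / (q 0 ⋯ q (n-1))` per admissible choice of the first `n` digits, so the `d`-dimensional
Hausdorff sum of this cover is `∏_{i<n} #(S ∩ [0, q i)) * (q i) ^ (-d)`. For `d > γ` the mass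
dimension gives `#(S ∩ [0, Q)) = o(Q ^ d)`; as `q i → ∞` the factors tend to `0`, hence so do the
products, and `μH[d]` vanishes on the set and on its integer translates.
-/

open scoped ENNReal NNReal Topology Pointwise
open Finset

lemma tendsto_prod_range_zero_of_tendsto_zero {R : Type*} [SeminormedCommRing R]
    [CompleteSpace R] {b : ℕ → R} (hb : Tendsto b atTop (𝓝 0)) :
    Tendsto (fun n => ∏ i ∈ range n, b i) atTop (𝓝 0) := by
  refine (summable_of_ratio_norm_eventually_le (r := 1 / 2) (by norm_num) ?_).tendsto_atTop_zero
  filter_upwards [hb.norm.eventually (ge_mem_nhds (by norm_num : ‖(0 : R)‖ < 1 / 2))] with n hn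
  rw [prod_range_succ, mul_comm (1 / 2 : ℝ)]
  exact (norm_mul_le _ _).trans (mul_le_mul_of_nonneg_left hn (norm_nonneg _))

lemma eventually_le_rpow_of_tendsto_log_div_log {f : ℕ → ℕ} {γ s : ℝ}
    (hf : Tendsto (fun n : ℕ => Real.log (f n) / Real.log n) atTop (𝓝 γ)) (hs : γ < s) :
    ∀ᶠ n : ℕ in atTop, (f n : ℝ) ≤ (n : ℝ) ^ s := by
  filter_upwards [hf.eventually (gt_mem_nhds hs), eventually_ge_atTop 2] with n hn hn2
  have hlog : 0 < Real.log n := Real.log_pos (by exact_mod_cast hn2)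
  rcases (f n).eq_zero_or_pos with h0 | h0
  · rw [h0, Nat.cast_zero]; positivity
  · rw [Real.le_rpow_iff_log_le (by exact_mod_cast h0) (by positivity)]
    exact ((div_lt_iff₀ hlog).1 hn).le

lemma tendsto_card_filter_mem_mul_rpow_neg {S : Set ℕ} {γ d : ℝ}
    (hmass : Tendsto
      (fun n : ℕ => Real.log (((Finset.range n).filter
          (fun m => m ∈ S ∧ 2 * m < n)).card : ℝ) / Real.log n)
      atTop (𝓝 γ)) (hd : γ < d) :
    Tendsto (fun Q : ℕ => (((range Q).filter (· ∈ S)).card : ℝ) * (Q : ℝ) ^ (-d))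
      atTop (𝓝 0) := by
  obtain ⟨s, hγs, hsd⟩ := exists_between hd
  have hcount : ∀ Q, (range Q).filter (· ∈ S) =
      (range (2 * Q)).filter (fun m => m ∈ S ∧ 2 * m < 2 * Q) := by
    intro Q; ext m; simp only [mem_filter, mem_range]
    exact ⟨fun ⟨h, hS⟩ => ⟨by omega, hS, by omega⟩, fun ⟨_, hS, h⟩ => ⟨by omega, hS⟩⟩
  have hbound : ∀ᶠ Q : ℕ in atTop,
      (((range Q).filter (· ∈ S)).card : ℝ) ≤ 2 ^ s * (Q : ℝ) ^ s := by
    filter_upwards [(tendsto_id.const_mul_atTop' two_pos).eventually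
      (eventually_le_rpow_of_tendsto_log_div_log hmass hγs)] with Q hQ
    rw [hcount, ← Real.mul_rpow zero_le_two Q.cast_nonneg]
    exact_mod_cast hQ
  have hlim : Tendsto (fun Q : ℕ => 2 ^ s * (Q : ℝ) ^ (-(d - s))) atTop (𝓝 0) := by
    simpa using ((tendsto_rpow_neg_atTop (sub_pos.2 hsd)).comp
      tendsto_natCast_atTop_atTop).const_mul (2 ^ s)
  refine squeeze_zero' (Eventually.of_forall fun Q => by positivity) ?_ hlim
  filter_upwards [hbound, eventually_gt_atTop 0] with Q hQ hQ0
  have hQ0' : (0 : ℝ) < Q := Nat.cast_pos.2 hQ0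
  calc (((range Q).filter (· ∈ S)).card : ℝ) * (Q : ℝ) ^ (-d)
      ≤ 2 ^ s * (Q : ℝ) ^ s * (Q : ℝ) ^ (-d) := by gcongr
    _ = 2 ^ s * (Q : ℝ) ^ (-(d - s)) := by
      rw [mul_assoc, ← Real.rpow_add hQ0']; ring_nf

section CantorSeries

variable {q : ℕ → ℕ}

lemma cantorProd_succ (q : ℕ → ℕ) (n : ℕ) : cantorProd q (n + 1) = cantorProd q n * q n :=
  prod_range_succ _ _

lemma cantorProd_pos (hq : ∀ n, 0 < q n) (n : ℕ) : 0 < cantorProd q n :=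
  prod_pos fun i _ => Nat.cast_pos.2 (hq i)

lemma tendsto_cantorProd_inv (hq : ∀ n, 2 ≤ q n) :
    Tendsto (fun n => (cantorProd q n)⁻¹) atTop (𝓝 0) := by
  refine tendsto_inv_atTop_zero.comp (tendsto_atTop_mono (fun n => ?_)
    (tendsto_pow_atTop_atTop_of_one_lt (one_lt_two : (1 : ℝ) < 2)))
  calc (2 : ℝ) ^ n = ∏ _i ∈ range n, (2 : ℝ) := by simp
    _ ≤ cantorProd q n := prod_le_prod (fun _ _ => zero_le_two) fun i _ => by exact_mod_cast hq i

lemma div_cantorProd_succ_le (hq : ∀ n, 0 < q n) {e k : ℕ} (he : e < q k) :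
    (e : ℝ) / cantorProd q (k + 1) ≤ (cantorProd q k)⁻¹ - (cantorProd q (k + 1))⁻¹ := by
  have hP := cantorProd_pos hq k
  have hqk : (0 : ℝ) < q k := Nat.cast_pos.2 (hq k)
  have he' : (e : ℝ) ≤ q k - 1 := by
    have : ((e + 1 : ℕ) : ℝ) ≤ q k := by exact_mod_cast he
    push_cast at this; linarith
  calc (e : ℝ) / cantorProd q (k + 1) ≤ (q k - 1) / cantorProd q (k + 1) :=
        div_le_div_of_nonneg_right he' (cantorProd_pos hq _).le
    _ = (cantorProd q k)⁻¹ - (cantorProd q (k + 1))⁻¹ := by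
        rw [cantorProd_succ]; field_simp

lemma sum_range_tail_le_inv_cantorProd (hq : ∀ n, 0 < q n) {E : ℕ → ℕ} (hE : ∀ n, E n < q n)
    (n m : ℕ) :
    ∑ k ∈ range m, (E (k + n) : ℝ) / cantorProd q (k + n + 1) ≤ (cantorProd q n)⁻¹ :=
  calc ∑ k ∈ range m, (E (k + n) : ℝ) / cantorProd q (k + n + 1)
      ≤ ∑ k ∈ range m, ((cantorProd q (k + n))⁻¹ - (cantorProd q (k + 1 + n))⁻¹) :=
        sum_le_sum fun k _ => by rw [add_right_comm k 1 n]; exact div_cantorProd_succ_le hq (hE _)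
    _ = (cantorProd q n)⁻¹ - (cantorProd q (m + n))⁻¹ := by
        simpa using sum_range_sub' (fun k => (cantorProd q (k + n))⁻¹) m
    _ ≤ (cantorProd q n)⁻¹ := sub_le_self _ (inv_nonneg.2 (cantorProd_pos hq _).le)

/-- The number in `[0, 1]` whose `Q`-Cantor digits are `E`. -/
def cantorSum (q E : ℕ → ℕ) : ℝ := ∑' n, (E n : ℝ) / cantorProd q (n + 1)

lemma cantorSum_mem_Icc (hq : ∀ n, 0 < q n) {E : ℕ → ℕ} (hE : ∀ n, E n < q n) (n : ℕ) :
    cantorSum q E ∈ Set.Icc (∑ k ∈ range n, (E k : ℝ) / cantorProd q (k + 1))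
      (∑ k ∈ range n, (E k : ℝ) / cantorProd q (k + 1) + (cantorProd q n)⁻¹) := by
  have hnonneg : ∀ k, 0 ≤ (E k : ℝ) / cantorProd q (k + 1) :=
    fun k => div_nonneg (E k).cast_nonneg (cantorProd_pos hq _).le
  have hsum : Summable fun k => (E k : ℝ) / cantorProd q (k + 1) :=
    summable_of_sum_range_le hnonneg fun m => by
      simpa using sum_range_tail_le_inv_cantorProd hq hE 0 m
  rw [cantorSum, ← hsum.sum_add_tsum_nat_add n]
  exact ⟨le_add_of_nonneg_right (tsum_nonneg fun k => hnonneg _),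
    (add_le_add_iff_left _).2 (Real.tsum_le_of_sum_range_le (fun k => hnonneg _)
      (sum_range_tail_le_inv_cantorProd hq hE n))⟩

theorem hausdorffMeasure_cantorSum_image_pi_eq_zero (hq : ∀ n, 2 ≤ q n) (D : ℕ → Finset ℕ)
    (hD : ∀ n, ∀ e ∈ D n, e < q n) {d : ℝ}
    (h : Tendsto (fun n => ∏ i ∈ range n, ((D i).card * (q i : ℝ) ^ (-d))) atTop (𝓝 0)) :
    μH[d] (cantorSum q '' Set.univ.pi fun n => (D n : Set ℕ)) = 0 := by
  have hq0 : ∀ n, 0 < q n := fun n => zero_lt_two.trans_le (hq n)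
  let left (n : ℕ) (f : (i : Fin n) → D i) : ℝ := ∑ i, ((f i : ℕ) : ℝ) / cantorProd q (i + 1)
  let cyl (n : ℕ) (f : (i : Fin n) → D i) : Set ℝ :=
    Set.Icc (left n f) (left n f + (cantorProd q n)⁻¹)
  have hdiam : ∀ n f, Metric.ediam (cyl n f) = ENNReal.ofReal (cantorProd q n)⁻¹ := by
    intro n f; simp [cyl, Real.ediam_Icc]
  have hcover : ∀ n, cantorSum q '' (Set.univ.pi fun n => (D n : Set ℕ)) ⊆ ⋃ f, cyl n f := by
    rintro n _ ⟨E, hE, rfl⟩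
    refine Set.mem_iUnion.2 ⟨fun i => ⟨E i, hE i trivial⟩, ?_⟩
    simpa [cyl, left, Fin.sum_univ_eq_sum_range (fun k => (E k : ℝ) / cantorProd q (k + 1))] using
      cantorSum_mem_Icc hq0 (fun k => hD k _ (hE k trivial)) n
  have hsum : ∀ n, ∑ f, Metric.ediam (cyl n f) ^ d =
      ENNReal.ofReal (∏ i ∈ range n, ((D i).card * (q i : ℝ) ^ (-d))) := by
    intro n
    have hP := cantorProd_pos hq0 n
    simp_rw [hdiam, sum_const, card_univ, Fintype.card_pi, Fintype.card_coe, nsmul_eq_mul]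
    rw [ENNReal.ofReal_rpow_of_pos (inv_pos.2 hP),
      Fin.prod_univ_eq_prod_range (fun i => #(D i)) n, prod_mul_distrib,
      ENNReal.ofReal_mul (prod_nonneg fun i _ => (#(D i)).cast_nonneg), ← Nat.cast_prod,
      ENNReal.ofReal_natCast, Real.finsetProd_rpow _ _ (fun i _ => (q i).cast_nonneg), ← cantorProd,
      Real.inv_rpow hP.le, Real.rpow_neg hP.le]
  have hle := Measure.hausdorffMeasure_le_liminf_sum d _
    (fun n => ENNReal.ofReal (cantorProd q n)⁻¹)
    (by simpa using ENNReal.tendsto_ofReal (tendsto_cantorProd_inv hq)) cyl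
    (Eventually.of_forall fun n f => (hdiam n f).le) (Eventually.of_forall hcover)
  simp_rw [hsum] at hle
  rw [(ENNReal.tendsto_ofReal h).liminf_eq, ENNReal.ofReal_zero] at hle
  exact nonpos_iff_eq_zero.1 hle

end CantorSeries

theorem dimH_digitsIn_le_general (q : ℕ → ℕ) (hq : ∀ n, 2 ≤ q n)
    (hlim : Tendsto q atTop atTop)
    (S : Set ℕ) (γ : ℝ)
    (hmass : Tendsto
      (fun n : ℕ => Real.log (((Finset.range n).filter
          (fun m => m ∈ S ∧ 2 * m < n)).card : ℝ) / Real.log n)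
      atTop (nhds γ)) :
    dimH {x : ℝ | ∃ E : ℕ → ℕ, IsCantorExp q x E ∧ ∀ n, E n ∈ S}
      ≤ ENNReal.ofReal γ := by
  set D : ℕ → Finset ℕ := fun n => (range (q n)).filter (· ∈ S)
  set T := cantorSum q '' Set.univ.pi fun n => (D n : Set ℕ)
  have hsub : {x : ℝ | ∃ E : ℕ → ℕ, IsCantorExp q x E ∧ ∀ n, E n ∈ S} ⊆
      ⋃ m : ℤ, (m : ℝ) +ᵥ T := by
    rintro x ⟨E, ⟨hElt, -, hx⟩, hES⟩
    refine Set.mem_iUnion.2 ⟨⌊x⌋, cantorSum q E, ⟨E, fun n _ => ?_, rfl⟩, ?_⟩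
    · simp [D, hElt n, hES n]
    · exact hx.symm
  refine dimH_le fun d hd => ?_
  rcases le_or_gt (d : ℝ) γ with hdγ | hγd
  · simpa using ENNReal.ofReal_le_ofReal hdγ
  have hT : μH[d] T = 0 :=
    hausdorffMeasure_cantorSum_image_pi_eq_zero hq D
      (fun n e he => mem_range.1 (mem_filter.1 he).1)
      (tendsto_prod_range_zero_of_tendsto_zero
        ((tendsto_card_filter_mem_mul_rpow_neg hmass hγd).comp hlim))
  have hnull : μH[d] {x : ℝ | ∃ E : ℕ → ℕ, IsCantorExp q x E ∧ ∀ n, E n ∈ S} = 0 :=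
    measure_mono_null hsub <| measure_iUnion_null fun m =>
      (hausdorffMeasure_vadd (m : ℝ) (Or.inl d.2) T).trans hT
  simp [hnull] at hd

/-- If `q n → ∞`, `log q n / ∑_{i≤n} log q i → 0`, and the mass dimension of
`S` is `γ`, then the set of reals all of whose `Q`-Cantor digits lie in `S`
has Hausdorff dimension at most `γ`. -/
theorem dimH_digitsIn_le (q : ℕ → ℕ) (hq : ∀ n, 2 ≤ q n)
    (hlim : Tendsto q atTop atTop)
    (hlog : Tendsto
      (fun n => Real.log (q n) / ∑ i ∈ Finset.range (n + 1), Real.log (q i))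
      atTop (nhds 0))
    (S : Set ℕ) (γ : ℝ)
    (hmass : Tendsto
      (fun n : ℕ => Real.log (((Finset.range n).filter
          (fun m => m ∈ S ∧ 2 * m < n)).card : ℝ) / Real.log n)
      atTop (nhds γ)) :
    dimH {x : ℝ | ∃ E : ℕ → ℕ, IsCantorExp q x E ∧ ∀ n, E n ∈ S}
      ≤ ENNReal.ofReal γ :=
  dimH_digitsIn_le_general q hq hlim S γ hmass
end
end

section
/- If $Q$ is a basic sequence with $q_n \to \infty$ that is not fully divergent, then the set $\mathscr{N}(Q)$ of $Q$-normal numbers is empty. -/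
open scoped Classical
open Filter MeasureTheory

noncomputable section

/-- If `q n → ∞` and `Q` is not fully divergent, then there are no `Q`-normal
numbers. -/
theorem normal_empty_of_not_fullyDivergent (q : ℕ → ℕ) (hq : ∀ n, 2 ≤ q n)
    (hlim : Tendsto q atTop atTop)
    (hnotdiv : ∃ k : ℕ, 1 ≤ k ∧ ¬ Tendsto (fun n => Qnk q k n) atTop atTop) :
    {x : ℝ | ∀ k : ℕ, 1 ≤ k → QNormalOrder q k x} = ∅ := by
  ext x
  simp only [Set.mem_setOf_eq, Set.mem_empty_iff_false, iff_false]
  intro h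
  obtain ⟨k, hk1, hknd⟩ := hnotdiv
  have hprodpos : ∀ (K j : ℕ), (0:ℝ) < ∏ i ∈ Finset.range K, (q (j + i) : ℝ) := by
    intro K j
    apply Finset.prod_pos
    intro i _
    have := hq (j + i)
    positivity
  have hmono : ∀ K, Monotone (Qnk q K) := by
    intro K a b hab
    apply Finset.sum_le_sum_of_subset_of_nonneg (Finset.range_subset_range.mpr hab)
    intro j _ _
    have := hprodpos K j
    positivity
  have hbdd : ∃ C : ℝ, ∀ n, Qnk q k n ≤ C := by
    by_contra hC
    push_neg at hC
    apply hknd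
    rw [tendsto_atTop_atTop]
    intro b
    obtain ⟨n, hn⟩ := hC b
    exact ⟨n, fun m hm => le_trans hn.le (hmono k hm)⟩
  obtain ⟨C, hC⟩ := hbdd
  obtain ⟨m, hm⟩ := pow_unbounded_of_one_lt C (by norm_num : (1:ℝ) < 2)
  set K := k + m with hKdef
  have hQle : ∀ n, Qnk q K n * 2 ^ m ≤ Qnk q k n := by
    intro n
    unfold Qnk
    rw [Finset.sum_mul]
    apply Finset.sum_le_sum
    intro j _
    rw [div_mul_eq_mul_div, one_mul, div_le_div_iff₀ (hprodpos K j) (hprodpos k j), one_mul]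
    rw [hKdef, Finset.prod_range_add, mul_comm ((2:ℝ) ^ m)]
    apply mul_le_mul_of_nonneg_left _ (le_of_lt (hprodpos k j))
    calc (2:ℝ) ^ m = ∏ _i ∈ Finset.range m, (2:ℝ) := by
          rw [Finset.prod_const, Finset.card_range]
      _ ≤ ∏ i ∈ Finset.range m, (q (j + (k + i)) : ℝ) := by
          apply Finset.prod_le_prod
          · intro i _; norm_num
          · intro i _; exact_mod_cast hq (j + (k + i))
  have hC0 : 0 < C := by
    have h1 : (0:ℝ) < Qnk q k 1 := by
      unfold Qnk
      rw [Finset.sum_range_one]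
      have := hprodpos k 0
      positivity
    linarith [hC 1]
  set c : ℝ := C / 2 ^ m with hcdef
  have hc0 : 0 < c := by positivity
  have hc1 : c < 1 := by
    rw [hcdef, div_lt_one (by positivity)]
    exact hm
  have hQKle : ∀ n, Qnk q K n ≤ c := by
    intro n
    rw [hcdef, le_div_iff₀ (by positivity : (0:ℝ) < 2 ^ m)]
    exact le_trans (hQle n) (hC n)
  have hQKpos : ∀ n, 1 ≤ n → 0 < Qnk q K n := by
    intro n hn
    have h1 : (0:ℝ) < Qnk q K 1 := by
      unfold Qnk
      rw [Finset.sum_range_one]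
      have := hprodpos K 0
      positivity
    exact lt_of_lt_of_le h1 (hmono K hn)
  have hkK : 1 ≤ K := le_trans hk1 (Nat.le_add_right k m)
  obtain ⟨E, _, hT⟩ := h K hkK
  have hB := hT (fun _ => 0)
  have hinv : 1 < 1 / c := one_lt_one_div hc0 hc1
  set ε : ℝ := min (1/2) ((1/c - 1)/2) with hεdef
  have hε0 : 0 < ε := by
    apply lt_min (by norm_num)
    linarith
  have hev := (Metric.tendsto_atTop.mp hB ε hε0)
  obtain ⟨N, hN⟩ := hev
  have hn1 : 1 ≤ max N 1 := le_max_right N 1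
  have hdist := hN (max N 1) (le_max_left N 1)
  rw [Real.dist_eq] at hdist
  set n := max N 1
  by_cases hz : blockCount E K (fun _ => 0) n = 0
  · rw [hz] at hdist
    simp only [Nat.cast_zero, zero_div] at hdist
    have : ε ≤ 1/2 := min_le_left _ _
    rw [abs_sub_comm, abs_of_nonneg (by norm_num)] at hdist
    linarith
  · have hb1 : (1:ℝ) ≤ blockCount E K (fun _ => 0) n := by
      exact_mod_cast Nat.one_le_iff_ne_zero.mpr hz
    have hQpos := hQKpos n hn1
    have hge : 1 / c ≤ (blockCount E K (fun _ => 0) n : ℝ) / Qnk q K n :=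
      le_trans (one_div_le_one_div_of_le hQpos (hQKle n))
        ((div_le_div_iff_of_pos_right hQpos).mpr hb1)
    have hε2 : ε ≤ (1/c - 1)/2 := min_le_right _ _
    have habs := abs_lt.mp hdist
    linarith [habs.2]
end
end
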